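/- Let Γ, Δ be ILX-MCSs with A ▷ B ∈ Γ, Γ ≺_S Δ, and A ∈ Δ. Then there exists an ILX-MCS Δ' with Γ ≺_S Δ' and B, □¬B ∈ Δ'. -/

import Mathlib

inductive ILForm : Type
  | bot : ILForm
  | var : ℕ → ILForm
  | imp : ILForm → ILForm → ILForm
  | box : ILForm → ILForm
  | rhd : ILForm → ILForm → ILForm
  deriving DecidableEq

namespace ILForm

def neg (A : ILForm) : ILForm := A.imp ILForm.bot
def or (A B : ILForm) : ILForm := A.neg.imp B
def and (A B : ILForm) : ILForm := (A.imp B.neg).neg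
def dia (A : ILForm) : ILForm := A.neg.box.neg

end ILForm

/-- A Boolean valuation: respects `⊥` and `→`, arbitrary on variables, boxes and `▷`. -/
def IsBoolVal (v : ILForm → Bool) : Prop :=
  v ILForm.bot = false ∧ ∀ A B : ILForm, v (A.imp B) = (!(v A) || v B)

/-- Classical tautologies in the modal language. -/
def ILTaut (A : ILForm) : Prop := ∀ v, IsBoolVal v → v A = true

/-- Provability in the interpretability logic IL. -/
inductive ILProv : ILForm → Prop
  | taut {A : ILForm} : ILTaut A → ILProv A
  | K {A B : ILForm} : ILProv (((A.imp B).box).imp ((A.box).imp (B.box)))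
  | L {A : ILForm} : ILProv ((((A.box).imp A).box).imp (A.box))
  | J1 {A B : ILForm} : ILProv (((A.imp B).box).imp (A.rhd B))
  | J2 {A B C : ILForm} : ILProv (((A.rhd B).and (B.rhd C)).imp (A.rhd C))
  | J3 {A B C : ILForm} : ILProv (((A.rhd C).and (B.rhd C)).imp ((A.or B).rhd C))
  | J4 {A B : ILForm} : ILProv ((A.rhd B).imp ((A.dia).imp (B.dia)))
  | J5 {A : ILForm} : ILProv ((A.dia).rhd A)
  | mp {A B : ILForm} : ILProv (A.imp B) → ILProv A → ILProv B
  | nec {A : ILForm} : ILProv A → ILProv (A.box)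

/-- An extension of IL: contains all IL theorems, closed under modus ponens and necessitation. -/
structure ILExtension (P : ILForm → Prop) : Prop where
  il : ∀ {A}, ILProv A → P A
  mp : ∀ {A B}, P (A.imp B) → P A → P B
  nec : ∀ {A}, P A → P (A.box)

/-- Derivability from a set of assumptions in the logic `P`. -/
inductive Deriv (P : ILForm → Prop) (S : Set ILForm) : ILForm → Prop
  | thm {A : ILForm} : P A → Deriv P S A
  | mem {A : ILForm} : A ∈ S → Deriv P S A
  | mp {A B : ILForm} : Deriv P S (A.imp B) → Deriv P S A → Deriv P S B

def ILConsistent (P : ILForm → Prop) (S : Set ILForm) : Prop := ¬ Deriv P S ILForm.bot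

/-- Maximal consistent set w.r.t. the logic `P`. -/
def ILMCS (P : ILForm → Prop) (S : Set ILForm) : Prop :=
  ILConsistent P S ∧ ∀ T : Set ILForm, S ⊂ T → ¬ ILConsistent P T

/-- Finite disjunction; the empty disjunction is `⊥`. -/
def bigOr : List ILForm → ILForm
  | [] => ILForm.bot
  | A :: l => A.or (bigOr l)

/-- `Assuring Γ Δ S` ("Γ ≺_S Δ"): Δ is an S-assuring successor of Γ. -/
def Assuring (Γ Δ : Set ILForm) (S : Set ILForm) : Prop :=
  ∀ (A : ILForm) (L : List ILForm), (∀ B ∈ L, B ∈ S) →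
    (A.neg.rhd (bigOr (L.map ILForm.neg))) ∈ Γ → A ∈ Δ ∧ A.box ∈ Δ

/-- `Succ Γ Δ` ("Γ ≺ Δ"): whenever □A ∈ Γ, both A and □A are in Δ. -/
def Succ (Γ Δ : Set ILForm) : Prop :=
  ∀ A : ILForm, A.box ∈ Γ → A ∈ Δ ∧ A.box ∈ Δ

/-!
Call `C` assured at `Γ` when `¬C ▷ ⋁ ¬Sⱼ ∈ Γ` for finitely many `Sⱼ ∈ S`. By J1–J3 the assured
formulas are closed under derivation, and by J5 (`¬□C ▷ ¬C`) under `□`; so every MCS containing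
them is an `S`-assuring successor of `Γ`. It remains to add `B ∧ □¬B` consistently. Otherwise
`¬(B ∧ □¬B)` would be assured, and since `A ▷ B ▷ B ∧ □¬B` (the second step is Löb's axiom with J5),
so would be `¬A`; then `¬A ∈ Δ`, contradicting `A ∈ Δ`.
-/

open ILForm

variable {P : ILForm → Prop} {Γ Δ S : Set ILForm}

section Tautologies

variable {v : ILForm → Bool}

theorem IsBoolVal.imp (hv : IsBoolVal v) (A B : ILForm) : v (A.imp B) = (!v A || v B) :=
  hv.2 A B

theorem IsBoolVal.neg (hv : IsBoolVal v) (A : ILForm) : v A.neg = !v A := by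
  simp [ILForm.neg, hv.imp, hv.1]

theorem IsBoolVal.or (hv : IsBoolVal v) (A B : ILForm) : v (A.or B) = (v A || v B) := by
  simp [ILForm.or, hv.imp, hv.neg]

theorem IsBoolVal.and (hv : IsBoolVal v) (A B : ILForm) : v (A.and B) = (v A && v B) := by
  simp [ILForm.and, hv.imp, hv.neg]

namespace ILTaut

variable (a b c : ILForm)

theorem imp_self : ILTaut (a.imp a) := fun v hv => by
  simp [hv.imp]

theorem imp_intro : ILTaut (b.imp (a.imp b)) := fun v hv => by
  simp only [hv.imp]
  cases v a <;> cases v b <;> rfl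

theorem imp_distrib : ILTaut ((a.imp (c.imp b)).imp ((a.imp c).imp (a.imp b))) := fun v hv => by
  simp only [hv.imp]
  cases v a <;> cases v b <;> cases v c <;> rfl

theorem bot_imp : ILTaut (bot.imp a) := fun v hv => by
  simp [hv.imp, hv.1]

theorem not_not_intro : ILTaut (a.imp a.neg.neg) := fun v hv => by
  simp only [hv.imp, hv.neg]
  cases v a <;> rfl

theorem not_not_elim : ILTaut (a.neg.neg.imp a) := fun v hv => by
  simp only [hv.imp, hv.neg]
  cases v a <;> rfl

theorem and_intro : ILTaut (a.imp (b.imp (a.and b))) := fun v hv => by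
  simp only [hv.imp, hv.and]
  cases v a <;> cases v b <;> rfl

theorem and_left : ILTaut ((a.and b).imp a) := fun v hv => by
  simp only [hv.imp, hv.and]
  cases v a <;> cases v b <;> rfl

theorem and_right : ILTaut ((a.and b).imp b) := fun v hv => by
  simp only [hv.imp, hv.and]
  cases v a <;> cases v b <;> rfl

theorem contrapose : ILTaut ((a.imp b).imp (b.neg.imp a.neg)) := fun v hv => by
  simp only [hv.imp, hv.neg]
  cases v a <;> cases v b <;> rfl

theorem contrapose_trans :
    ILTaut ((a.imp b).imp ((b.imp c).imp (c.neg.imp a.neg))) := fun v hv => by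
  simp only [hv.imp, hv.neg]
  cases v a <;> cases v b <;> cases v c <;> rfl

theorem neg_imp_or : ILTaut (b.neg.imp (a.neg.or (a.imp b).neg)) := fun v hv => by
  simp only [hv.imp, hv.neg, hv.or]
  cases v a <;> cases v b <;> rfl

theorem or_mono_right : ILTaut ((b.imp c).imp ((a.or b).imp (a.or c))) := fun v hv => by
  simp only [hv.imp, hv.or]
  cases v a <;> cases v b <;> cases v c <;> rfl

theorem or_intro_right : ILTaut ((b.imp c).imp (b.imp (a.or c))) := fun v hv => by
  simp only [hv.imp, hv.or]
  cases v a <;> cases v b <;> cases v c <;> rfl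

theorem neg_and_negBox : ILTaut ((a.and a.neg.box).neg.imp (a.neg.box.imp a.neg)) :=
  fun v hv => by
  simp only [hv.imp, hv.neg, hv.and]
  cases v a <;> cases v a.neg.box <;> rfl

theorem dia_split :
    ILTaut ((a.dia.imp (a.and a.neg.box).dia).imp
      (a.imp ((a.and a.neg.box).or (a.and a.neg.box).dia))) := fun v hv => by
  simp only [ILForm.dia, hv.imp, hv.neg, hv.and, hv.or]
  cases v a <;> cases v a.neg.box <;> cases v (a.and a.neg.box).neg.box <;> rfl

end ILTaut

end Tautologies

namespace ILExtension


variable {A B C : ILForm}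

theorem taut (hP : ILExtension P) (h : ILTaut A) : P A := hP.il (ILProv.taut h)

theorem mp_taut (hP : ILExtension P) (h : ILTaut (A.imp B)) (hA : P A) : P B := hP.mp (hP.taut h) hA

theorem rhd_of_imp (hP : ILExtension P) (h : P (A.imp B)) : P (A.rhd B) := hP.mp (hP.il ILProv.J1) (hP.nec h)

theorem box_mono (hP : ILExtension P) (h : P (A.imp B)) : P (A.box.imp B.box) := hP.mp (hP.il ILProv.K) (hP.nec h)

/-- Löb: if `B` is possible, it is possible at a last `B`-world. -/
theorem dia_imp_dia_and_box_neg (hP : ILExtension P) (B : ILForm) :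
    P (B.dia.imp (B.and B.neg.box).dia) :=
  hP.mp (hP.mp_taut (ILTaut.contrapose_trans _ _ _)
    (hP.box_mono (hP.taut (ILTaut.neg_and_negBox B)))) (hP.il ILProv.L)

theorem imp_or_dia_and_box_neg (hP : ILExtension P) (B : ILForm) :
    P (B.imp ((B.and B.neg.box).or (B.and B.neg.box).dia)) :=
  hP.mp_taut (ILTaut.dia_split B) (hP.dia_imp_dia_and_box_neg B)

theorem bigOr_imp_bigOr_append_left (hP : ILExtension P) (l₁ l₂ : List ILForm) :
    P ((bigOr l₁).imp (bigOr (l₁ ++ l₂))) := by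
  induction l₁ with
  | nil => exact hP.taut (ILTaut.bot_imp _)
  | cons a l ih => exact hP.mp_taut (ILTaut.or_mono_right _ _ _) ih

theorem bigOr_imp_bigOr_append_right (hP : ILExtension P) (l₁ l₂ : List ILForm) :
    P ((bigOr l₂).imp (bigOr (l₁ ++ l₂))) := by
  induction l₁ with
  | nil => exact hP.taut (ILTaut.imp_self _)
  | cons a l ih => exact hP.mp_taut (ILTaut.or_intro_right _ _ _) ih

end ILExtension

namespace Deriv

variable {T U : Set ILForm} {A B : ILForm}

theorem cut (hT : ∀ x ∈ T, Deriv P U x) (h : Deriv P T A) : Deriv P U A := by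
  induction h with
  | thm h => exact thm h
  | mem h => exact hT _ h
  | mp _ _ ih₁ ih₂ => exact mp ih₁ ih₂

theorem mono (hTU : T ⊆ U) (h : Deriv P T A) : Deriv P U A :=
  h.cut fun _ hx => mem (hTU hx)

theorem of_taut_imp (hP : ILExtension P) (h : ILTaut (A.imp B)) (hA : Deriv P T A) :
    Deriv P T B :=
  mp (thm (hP.taut h)) hA

theorem deduction (hP : ILExtension P) (h : Deriv P (insert A T) B) : Deriv P T (A.imp B) := by
  induction h with
  | thm h => exact (thm h).of_taut_imp hP (ILTaut.imp_intro _ _)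
  | mem h =>
    rcases h with rfl | h
    · exact thm (hP.taut (ILTaut.imp_self _))
    · exact (mem h).of_taut_imp hP (ILTaut.imp_intro _ _)
  | mp _ _ ih₁ ih₂ => exact mp (ih₁.of_taut_imp hP (ILTaut.imp_distrib _ _ _)) ih₂

theorem exists_mem_of_sUnion {c : Set (Set ILForm)} (hc : IsChain (· ⊆ ·) c)
    (hne : c.Nonempty) (h : Deriv P (⋃₀ c) A) : ∃ t ∈ c, Deriv P t A := by
  induction h with
  | thm h => exact ⟨hne.some, hne.some_mem, thm h⟩
  | mem h =>
    obtain ⟨t, ht, hA⟩ := h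
    exact ⟨t, ht, mem hA⟩
  | mp _ _ ih₁ ih₂ =>
    obtain ⟨t₁, ht₁, h₁⟩ := ih₁
    obtain ⟨t₂, ht₂, h₂⟩ := ih₂
    rcases hc.total ht₁ ht₂ with h | h
    · exact ⟨t₂, ht₂, mp (h₁.mono h) h₂⟩
    · exact ⟨t₁, ht₁, mp h₁ (h₂.mono h)⟩

end Deriv

theorem lindenbaum {T : Set ILForm} (h : ILConsistent P T) : ∃ M, T ⊆ M ∧ ILMCS P M := by
  obtain ⟨M, hTM, hmax⟩ := zorn_subset_nonempty {U | ILConsistent P U}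
    (fun c hc hchain hne => ⟨⋃₀ c, fun hbot => by
        obtain ⟨t, ht, hbot⟩ := Deriv.exists_mem_of_sUnion hchain hne hbot
        exact hc ht hbot,
      fun _ => Set.subset_sUnion_of_mem⟩) T h
  exact ⟨M, hTM, hmax.prop, fun U hMU hU => hMU.2 (hmax.2 hU hMU.1)⟩

namespace ILMCS

variable {A B C : ILForm}

theorem mem_of_deriv (hΓ : ILMCS P Γ) (h : Deriv P Γ A) : A ∈ Γ := by
  by_contra hA
  refine hΓ.2 (insert A Γ) (Set.ssubset_insert hA) fun hbot => hΓ.1 (hbot.cut ?_)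
  rintro x (rfl | hx)
  exacts [h, Deriv.mem hx]

theorem mem_of_prov (hΓ : ILMCS P Γ) (h : P A) : A ∈ Γ := hΓ.mem_of_deriv (Deriv.thm h)

theorem mp_mem (hΓ : ILMCS P Γ) (hAB : A.imp B ∈ Γ) (hA : A ∈ Γ) : B ∈ Γ :=
  hΓ.mem_of_deriv (Deriv.mp (Deriv.mem hAB) (Deriv.mem hA))

theorem neg_notMem (hΓ : ILMCS P Γ) (hA : A ∈ Γ) : A.neg ∉ Γ := fun hnA =>
  hΓ.1 (Deriv.mp (Deriv.mem hnA) (Deriv.mem hA))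

theorem mem_of_taut_imp (hP : ILExtension P) (hΓ : ILMCS P Γ) (h : ILTaut (A.imp B))
    (hA : A ∈ Γ) : B ∈ Γ :=
  hΓ.mp_mem (hΓ.mem_of_prov (hP.taut h)) hA

theorem and_mem (hP : ILExtension P) (hΓ : ILMCS P Γ) (hA : A ∈ Γ) (hB : B ∈ Γ) :
    A.and B ∈ Γ :=
  hΓ.mp_mem (hΓ.mem_of_taut_imp hP (ILTaut.and_intro A B) hA) hB

theorem rhd_of_imp (hP : ILExtension P) (hΓ : ILMCS P Γ) (h : P (A.imp B)) : A.rhd B ∈ Γ :=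
  hΓ.mem_of_prov (hP.rhd_of_imp h)

theorem rhd_trans (hP : ILExtension P) (hΓ : ILMCS P Γ) (hAB : A.rhd B ∈ Γ)
    (hBC : B.rhd C ∈ Γ) : A.rhd C ∈ Γ :=
  hΓ.mp_mem (hΓ.mem_of_prov (hP.il ILProv.J2)) (hΓ.and_mem hP hAB hBC)

theorem or_rhd (hP : ILExtension P) (hΓ : ILMCS P Γ) (hAC : A.rhd C ∈ Γ)
    (hBC : B.rhd C ∈ Γ) : (A.or B).rhd C ∈ Γ :=
  hΓ.mp_mem (hΓ.mem_of_prov (hP.il ILProv.J3)) (hΓ.and_mem hP hAC hBC)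

theorem neg_box_rhd_neg (hP : ILExtension P) (hΓ : ILMCS P Γ) (A : ILForm) :
    A.box.neg.rhd A.neg ∈ Γ :=
  hΓ.rhd_trans hP
    (hΓ.rhd_of_imp hP (hP.mp_taut (ILTaut.contrapose _ _)
      (hP.box_mono (hP.taut (ILTaut.not_not_elim A)))))
    (hΓ.mem_of_prov (hP.il (ILProv.J5 (A := A.neg))))

theorem rhd_and_box_neg (hP : ILExtension P) (hΓ : ILMCS P Γ) (B : ILForm) :
    B.rhd (B.and B.neg.box) ∈ Γ :=
  hΓ.rhd_trans hP (hΓ.rhd_of_imp hP (hP.imp_or_dia_and_box_neg B))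
    (hΓ.or_rhd hP (hΓ.rhd_of_imp hP (hP.taut (ILTaut.imp_self _)))
      (hΓ.mem_of_prov (hP.il ILProv.J5)))

end ILMCS

def Assured (Γ S : Set ILForm) (C : ILForm) : Prop :=
  ∃ L : List ILForm, (∀ B ∈ L, B ∈ S) ∧ C.neg.rhd (bigOr (L.map ILForm.neg)) ∈ Γ

namespace Assured

variable {C D : ILForm}

theorem of_neg_rhd_neg (hP : ILExtension P) (hΓ : ILMCS P Γ) (hC : Assured Γ S C)
    (h : D.neg.rhd C.neg ∈ Γ) : Assured Γ S D :=
  let ⟨L, hL, hCL⟩ := hC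
  ⟨L, hL, hΓ.rhd_trans hP h hCL⟩

theorem of_prov (hP : ILExtension P) (hΓ : ILMCS P Γ) (h : P C) : Assured Γ S C :=
  ⟨[], by simp, hΓ.rhd_of_imp hP (hP.mp_taut (ILTaut.not_not_intro C) h)⟩

theorem box (hP : ILExtension P) (hΓ : ILMCS P Γ) (hC : Assured Γ S C) :
    Assured Γ S C.box :=
  hC.of_neg_rhd_neg hP hΓ (hΓ.neg_box_rhd_neg hP C)

theorem mp (hP : ILExtension P) (hΓ : ILMCS P Γ) (hCD : Assured Γ S (C.imp D))
    (hC : Assured Γ S C) : Assured Γ S D := by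
  obtain ⟨L₁, hL₁, h₁⟩ := hCD
  obtain ⟨L₂, hL₂, h₂⟩ := hC
  have hE₁ := hΓ.rhd_of_imp hP (hP.bigOr_imp_bigOr_append_right (L₂.map neg) (L₁.map neg))
  have hE₂ := hΓ.rhd_of_imp hP (hP.bigOr_imp_bigOr_append_left (L₂.map neg) (L₁.map neg))
  refine ⟨L₂ ++ L₁, fun B hB => (List.mem_append.1 hB).elim (hL₂ B) (hL₁ B), ?_⟩
  rw [List.map_append]
  exact hΓ.rhd_trans hP (hΓ.rhd_of_imp hP (hP.taut (ILTaut.neg_imp_or C D)))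
    (hΓ.or_rhd hP (hΓ.rhd_trans hP h₂ hE₂) (hΓ.rhd_trans hP h₁ hE₁))

theorem of_deriv (hP : ILExtension P) (hΓ : ILMCS P Γ)
    (h : Deriv P {C | Assured Γ S C} D) : Assured Γ S D := by
  induction h with
  | thm h => exact of_prov hP hΓ h
  | mem h => exact h
  | mp _ _ ih₁ ih₂ => exact ih₁.mp hP hΓ ih₂

theorem neg_of_rhd (hP : ILExtension P) (hΓ : ILMCS P Γ) (hD : Assured Γ S D.neg)
    (h : C.rhd D ∈ Γ) : Assured Γ S C.neg :=
  hD.of_neg_rhd_neg hP hΓ <|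
    hΓ.rhd_trans hP (hΓ.rhd_of_imp hP (hP.taut (ILTaut.not_not_elim C)))
      (hΓ.rhd_trans hP h (hΓ.rhd_of_imp hP (hP.taut (ILTaut.not_not_intro D))))

end Assured

theorem consistent_insert_and_box_neg_assured (hP : ILExtension P) (hΓ : ILMCS P Γ)
    (hΔ : ILMCS P Δ) {A B : ILForm} (hAB : A.rhd B ∈ Γ) (hΓΔ : Assuring Γ Δ S) (hA : A ∈ Δ) :
    ILConsistent P (insert (B.and B.neg.box) {C | Assured Γ S C}) := fun hbot => by
  have hF : Assured Γ S (B.and B.neg.box).neg := .of_deriv hP hΓ (hbot.deduction hP)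
  obtain ⟨L, hL, hnA⟩ := hF.neg_of_rhd hP hΓ (hΓ.rhd_trans hP hAB (hΓ.rhd_and_box_neg hP B))
  exact hΔ.neg_notMem hA (hΓΔ A.neg L hL hnA).1

/-- A ▷ B ∈ Γ ≺_S Δ ∋ A yields Δ' with Γ ≺_S Δ' ∋ B, □¬B. -/
theorem assuring_defies (P : ILForm → Prop) (hP : ILExtension P)
    (Γ Δ : Set ILForm) (hΓ : ILMCS P Γ) (hΔ : ILMCS P Δ)
    (A B : ILForm) (S : Set ILForm)
    (hrhd : A.rhd B ∈ Γ) (hAss : Assuring Γ Δ S) (hA : A ∈ Δ) :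
    ∃ Δ' : Set ILForm, ILMCS P Δ' ∧ Assuring Γ Δ' S ∧ B ∈ Δ' ∧ B.neg.box ∈ Δ' := by
  obtain ⟨Δ', hsub, hΔ'⟩ :=
    lindenbaum (consistent_insert_and_box_neg_assured hP hΓ hΔ hrhd hAss hA)
  have hF : B.and B.neg.box ∈ Δ' := hsub (Set.mem_insert _ _)
  refine ⟨Δ', hΔ', fun C L hL hCL => ?_, hΔ'.mem_of_taut_imp hP (ILTaut.and_left _ _) hF,
    hΔ'.mem_of_taut_imp hP (ILTaut.and_right _ _) hF⟩
  have hC : Assured Γ S C := ⟨L, hL, hCL⟩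
  exact ⟨hsub (Or.inr hC), hsub (Or.inr (hC.box hP hΓ))⟩
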